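/- Let H be an abelian group of order at least 4. Define on R = H ∪ {0} the hyperaddition: x+0=x, x+x={0,x}, and x+y = R∖{0,x,y} whenever x,y,0 are pairwise distinct, with multiplication the group law extended by 0·g=g·0=0. Then R is a hyperfield extension of the Krasner hyperfield K. -/
import Mathlib


universe u

structure CHG (α : Type u) where
  zero : α
  hadd : α → α → Set α
  neg : α → α
  hadd_nonempty : ∀ a b, (hadd a b).Nonempty
  hadd_comm : ∀ a b, hadd a b = hadd b a
  hadd_assoc : ∀ a b c, (⋃ x ∈ hadd a b, hadd x c) = ⋃ y ∈ hadd b c, hadd a y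
  zero_hadd : ∀ a, hadd zero a = {a}
  zero_mem_hadd_neg : ∀ a, zero ∈ hadd a (neg a)
  neg_unique : ∀ a b, zero ∈ hadd a b → b = neg a
  reversible : ∀ a b c, a ∈ hadd b c → c ∈ hadd a (neg b)

structure Hyperring (α : Type u) extends CHG α where
  one : α
  mul : α → α → α
  mul_assoc : ∀ a b c, mul (mul a b) c = mul a (mul b c)
  one_mul : ∀ a, mul one a = a
  mul_one : ∀ a, mul a one = a
  left_distrib : ∀ a b c, (mul a) '' (hadd b c) = hadd (mul a b) (mul a c)
  right_distrib : ∀ a b c, (fun x => mul x c) '' (hadd a b) = hadd (mul a c) (mul b c)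
  zero_mul : ∀ a, mul zero a = zero
  mul_zero : ∀ a, mul a zero = zero
  zero_ne_one : zero ≠ one

structure Hyperfield (α : Type u) extends Hyperring α where
  exists_inv : ∀ a, a ≠ zero → ∃ b, mul a b = one ∧ mul b a = one

/-- Multiplication on `H ∪ {0}` (modelled as `Option H`, with `0 = none`). -/
def optMul {G : Type u} [CommGroup G] : Option G → Option G → Option G :=
  fun a b => match a, b with
  | some x, some y => some (x * y)
  | _, _ => none

open Classical in
/-- Lyndon's hyperaddition on `H ∪ {0}`: `x + 0 = x`, `x + x = {0, x}`, and
`x + y = R \ {0, x, y}` for `x, y, 0` pairwise distinct. -/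
noncomputable def lyndonAdd {G : Type u} [CommGroup G] :
    Option G → Option G → Set (Option G) :=
  fun a b => match a, b with
  | none, b => {b}
  | some x, none => {some x}
  | some x, some y =>
      if x = y then {none, some x} else {z | z ≠ none ∧ z ≠ some x ∧ z ≠ some y}

set_option linter.unusedSectionVars false

section LyndonAux
variable {G : Type u} [CommGroup G]

lemma ladd_zero (a : Option G) : lyndonAdd none a = {a} := rfl
lemma ladd_zero' (a : Option G) : lyndonAdd a none = {a} := by cases a <;> rfl
lemma ladd_same (x : G) : lyndonAdd (some x) (some x) = {none, some x} := by
  simp [lyndonAdd]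
lemma ladd_ne {x y : G} (h : x ≠ y) :
    lyndonAdd (some x) (some y) = {z | z ≠ none ∧ z ≠ some x ∧ z ≠ some y} := by
  simp [lyndonAdd, h]
lemma ladd_comm (a b : Option G) : lyndonAdd a b = lyndonAdd b a := by
  cases a with
  | none => rw [ladd_zero, ladd_zero']
  | some x => cases b with
    | none => rfl
    | some y =>
      by_cases h : x = y
      · subst h; rfl
      · rw [ladd_ne h, ladd_ne (Ne.symm h)]; ext z; constructor <;> exact fun ⟨h1,h2,h3⟩ => ⟨h1,h3,h2⟩

lemma tri_mem (hcard : ∀ x y z : G, ∃ w : G, w ≠ x ∧ w ≠ y ∧ w ≠ z)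
    (x y z : G) (t : Option G) :
    (∃ w ∈ lyndonAdd (some x) (some y), t ∈ lyndonAdd w (some z)) ↔
    ((x = y ∧ y = z ∧ (t = none ∨ t = some x)) ∨
     (x = y ∧ y ≠ z ∧ t ≠ none ∧ t ≠ some x) ∨
     (x = z ∧ x ≠ y ∧ t ≠ none ∧ t ≠ some x) ∨
     (y = z ∧ x ≠ y ∧ t ≠ none ∧ t ≠ some y) ∨
     (x ≠ y ∧ y ≠ z ∧ x ≠ z ∧
       (t = none ∨ t = some x ∨ t = some y ∨ t = some z ∨
        ∃ w : G, w ≠ x ∧ w ≠ y ∧ w ≠ z ∧ t ≠ some w))) := by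
  by_cases hxy : x = y
  · subst hxy
    rw [ladd_same]
    by_cases hxz : x = z
    · subst hxz
      constructor
      · rintro ⟨w, hw, ht⟩
        rcases hw with hw | hw <;> subst hw
        · rw [ladd_zero] at ht; exact Or.inl ⟨rfl, rfl, Or.inr ht⟩
        · rw [ladd_same] at ht
          rcases ht with ht | ht <;> exact Or.inl ⟨rfl, rfl, by tauto⟩
      · rintro (⟨-, -, ht | ht⟩ | h | h | h | h)
        · exact ⟨some x, Or.inr rfl, by rw [ladd_same]; exact Or.inl ht⟩
        · exact ⟨none, Or.inl rfl, by rw [ladd_zero]; exact ht⟩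
        all_goals simp_all
    · constructor
      · rintro ⟨w, hw, ht⟩
        rcases hw with hw | hw <;> subst hw
        · rw [ladd_zero] at ht
          subst ht
          exact Or.inr (Or.inl ⟨rfl, hxz, by simp, by simpa using Ne.symm hxz⟩)
        · rw [ladd_ne hxz] at ht
          exact Or.inr (Or.inl ⟨rfl, hxz, ht.1, ht.2.1⟩)
      · rintro (h | ⟨-, -, h1, h2⟩ | h | h | h)
        · exact absurd h.2.1 hxz
        · by_cases ht : t = some z
          · exact ⟨none, Or.inl rfl, by rw [ladd_zero]; exact ht⟩
          · exact ⟨some x, Or.inr rfl, by rw [ladd_ne hxz]; exact ⟨h1, h2, ht⟩⟩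
        all_goals simp_all
  · rw [ladd_ne hxy]
    have key : (∃ w ∈ ({z | z ≠ none ∧ z ≠ some x ∧ z ≠ some y} : Set (Option G)),
        t ∈ lyndonAdd w (some z)) ↔
        ∃ u : G, u ≠ x ∧ u ≠ y ∧ ((u = z ∧ (t = none ∨ t = some z)) ∨
          (u ≠ z ∧ t ≠ none ∧ t ≠ some u ∧ t ≠ some z)) := by
      constructor
      · rintro ⟨w, ⟨hw0, hwx, hwy⟩, ht⟩
        cases w with
        | none => exact absurd rfl hw0
        | some u =>
          refine ⟨u, fun h => hwx (by rw [h]), fun h => hwy (by rw [h]), ?_⟩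
          by_cases huz : u = z
          · subst huz; rw [ladd_same] at ht
            rcases ht with ht | ht <;> exact Or.inl ⟨rfl, by tauto⟩
          · rw [ladd_ne huz] at ht; exact Or.inr ⟨huz, ht.1, ht.2.1, ht.2.2⟩
      · rintro ⟨u, hux, huy, h | h⟩
        · refine ⟨some u, ⟨by simp, by simpa using hux, by simpa using huy⟩, ?_⟩
          rw [h.1, ladd_same]
          rcases h.2 with ht | ht
          · exact Or.inl ht
          · rw [← h.1] at ht ⊢; exact Or.inr ht
        · refine ⟨some u, ⟨by simp, by simpa using hux, by simpa using huy⟩, ?_⟩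
          rw [ladd_ne h.1]; exact ⟨h.2.1, h.2.2.1, h.2.2.2⟩
    rw [key]
    by_cases hyz : y = z
    · subst hyz
      constructor
      · rintro ⟨u, hux, huy, (⟨huz, ht⟩ | ⟨huz, h1, h2, h3⟩)⟩
        · exact absurd huz huy
        · exact Or.inr (Or.inr (Or.inr (Or.inl ⟨rfl, hxy, h1, h3⟩)))
      · rintro (h | h | h | ⟨-, -, h1, h2⟩ | h)
        · exact absurd h.1 hxy
        · exact absurd h.1 hxy
        · exact absurd h.1 h.2.1
        · cases t with
          | none => exact absurd rfl h1
          | some v =>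
            obtain ⟨w, hw⟩ := hcard x y v
            exact ⟨w, hw.1, hw.2.1,
              Or.inr ⟨hw.2.1, h1, by simpa using Ne.symm hw.2.2, h2⟩⟩
        · exact absurd rfl h.2.1
    · by_cases hxz : x = z
      · subst hxz
        constructor
        · rintro ⟨u, hux, huy, (⟨huz, ht⟩ | ⟨huz, h1, h2, h3⟩)⟩
          · exact absurd huz hux
          · exact Or.inr (Or.inr (Or.inl ⟨rfl, hxy, h1, h3⟩))
        · rintro (h | h | ⟨-, -, h1, h2⟩ | h | h)
          · exact absurd h.1 hxy
          · exact absurd h.1 hxy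
          · cases t with
            | none => exact absurd rfl h1
            | some v =>
              obtain ⟨w, hw⟩ := hcard x y v
              exact ⟨w, hw.1, hw.2.1,
                Or.inr ⟨hw.1, h1, by simpa using Ne.symm hw.2.2, h2⟩⟩
          · exact absurd h.1.symm hxy
          · exact absurd rfl h.2.2.1
      · -- all distinct
        constructor
        · rintro ⟨u, hux, huy, (⟨huz, ht⟩ | ⟨huz, h1, h2, h3⟩)⟩
          · refine Or.inr (Or.inr (Or.inr (Or.inr ⟨hxy, hyz, hxz, ?_⟩)))
            rcases ht with ht | ht
            · exact Or.inl ht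
            · exact Or.inr (Or.inr (Or.inr (Or.inl ht)))
          · exact Or.inr (Or.inr (Or.inr (Or.inr ⟨hxy, hyz, hxz,
              Or.inr (Or.inr (Or.inr (Or.inr ⟨u, hux, huy, huz, h2⟩)))⟩)))
        · rintro (h | h | h | h | ⟨-, -, -, ht⟩)
          · exact absurd h.1 hxy
          · exact absurd h.1 hxy
          · exact absurd h.1 hxz
          · exact absurd h.1 hyz
          · rcases ht with rfl | rfl | rfl | rfl | ⟨w, hwx, hwy, hwz, hwt⟩
            · exact ⟨z, Ne.symm hxz, Ne.symm hyz, Or.inl ⟨rfl, Or.inl rfl⟩⟩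
            · obtain ⟨w, hw⟩ := hcard x y z
              exact ⟨w, hw.1, hw.2.1, Or.inr ⟨hw.2.2, by simp,
                by simpa using Ne.symm hw.1, by simpa using hxz⟩⟩
            · obtain ⟨w, hw⟩ := hcard x y z
              exact ⟨w, hw.1, hw.2.1, Or.inr ⟨hw.2.2, by simp,
                by simpa using Ne.symm hw.2.1, by simpa using hyz⟩⟩
            · exact ⟨z, Ne.symm hxz, Ne.symm hyz, Or.inl ⟨rfl, Or.inr rfl⟩⟩
            · by_cases ht0 : t = none
              · exact ⟨z, Ne.symm hxz, Ne.symm hyz, Or.inl ⟨rfl, Or.inl ht0⟩⟩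
              · by_cases htz : t = some z
                · exact ⟨z, Ne.symm hxz, Ne.symm hyz, Or.inl ⟨rfl, Or.inr htz⟩⟩
                · exact ⟨w, hwx, hwy, Or.inr ⟨hwz, ht0, hwt, htz⟩⟩

def Q3 (x y z : G) (t : Option G) : Prop :=
    ((x = y ∧ y = z ∧ (t = none ∨ t = some x)) ∨
     (x = y ∧ y ≠ z ∧ t ≠ none ∧ t ≠ some x) ∨
     (x = z ∧ x ≠ y ∧ t ≠ none ∧ t ≠ some x) ∨
     (y = z ∧ x ≠ y ∧ t ≠ none ∧ t ≠ some y) ∨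
     (x ≠ y ∧ y ≠ z ∧ x ≠ z ∧
       (t = none ∨ t = some x ∨ t = some y ∨ t = some z ∨
        ∃ w : G, w ≠ x ∧ w ≠ y ∧ w ≠ z ∧ t ≠ some w)))

lemma tri_mem' (hcard : ∀ x y z : G, ∃ w : G, w ≠ x ∧ w ≠ y ∧ w ≠ z)
    (x y z : G) (t : Option G) :
    (∃ w ∈ lyndonAdd (some x) (some y), t ∈ lyndonAdd w (some z)) ↔ Q3 x y z t :=
  tri_mem hcard x y z t

lemma Q3_cyc (x y z : G) (t : Option G) : Q3 x y z t → Q3 y z x t := by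
  rintro (⟨rfl, rfl, ht⟩ | ⟨rfl, h, h1, h2⟩ | ⟨rfl, h, h1, h2⟩ | ⟨rfl, h, h1, h2⟩ |
    ⟨hxy, hyz, hxz, ht⟩)
  · exact Or.inl ⟨rfl, rfl, ht⟩
  · exact Or.inr (Or.inr (Or.inl ⟨rfl, h, h1, h2⟩))
  · exact Or.inr (Or.inr (Or.inr (Or.inl ⟨rfl, Ne.symm h, h1, h2⟩)))
  · exact Or.inr (Or.inl ⟨rfl, Ne.symm h, h1, h2⟩)
  · refine Or.inr (Or.inr (Or.inr (Or.inr ⟨hyz, Ne.symm hxz, Ne.symm hxy, ?_⟩)))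
    rcases ht with h | h | h | h | ⟨w, hw1, hw2, hw3, hw4⟩
    · exact Or.inl h
    · exact Or.inr (Or.inr (Or.inr (Or.inl h)))
    · exact Or.inr (Or.inl h)
    · exact Or.inr (Or.inr (Or.inl h))
    · exact Or.inr (Or.inr (Or.inr (Or.inr ⟨w, hw2, hw3, hw1, hw4⟩)))

lemma ladd_assoc (hcard : ∀ x y z : G, ∃ w : G, w ≠ x ∧ w ≠ y ∧ w ≠ z)
    (a b c : Option G) :
    (⋃ x ∈ lyndonAdd a b, lyndonAdd x c) = ⋃ y ∈ lyndonAdd b c, lyndonAdd a y := by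
  cases a with
  | none =>
    rw [ladd_zero, Set.biUnion_singleton]
    simp only [ladd_zero, Set.biUnion_of_singleton]
  | some x =>
    cases b with
    | none =>
      rw [ladd_zero' (some x), Set.biUnion_singleton, ladd_zero, Set.biUnion_singleton]
    | some y =>
      cases c with
      | none =>
        rw [ladd_zero' (some y), Set.biUnion_singleton]
        simp only [ladd_zero', Set.biUnion_of_singleton]
      | some z =>
        ext t
        simp only [Set.mem_iUnion, exists_prop]
        rw [tri_mem' hcard x y z t]
        have hre : (∃ w ∈ lyndonAdd (some y) (some z), t ∈ lyndonAdd (some x) w) ↔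
            (∃ w ∈ lyndonAdd (some y) (some z), t ∈ lyndonAdd w (some x)) := by
          constructor
          · rintro ⟨w, hw, ht⟩; exact ⟨w, hw, ladd_comm (some x) w ▸ ht⟩
          · rintro ⟨w, hw, ht⟩; exact ⟨w, hw, ladd_comm w (some x) ▸ ht⟩
        rw [hre, tri_mem' hcard y z x t]
        exact ⟨Q3_cyc x y z t, fun h => Q3_cyc z x y t (Q3_cyc y z x t h)⟩

lemma optMul_comm (a b : Option G) : optMul a b = optMul b a := by
  cases a <;> cases b <;> simp [optMul, mul_comm]

lemma ladd_nonempty (hcard : ∀ x y z : G, ∃ w : G, w ≠ x ∧ w ≠ y ∧ w ≠ z)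
    (a b : Option G) : (lyndonAdd a b).Nonempty := by
  cases a with
  | none => exact ⟨b, rfl⟩
  | some x =>
    cases b with
    | none => exact ⟨some x, rfl⟩
    | some y =>
      by_cases h : x = y
      · subst h; exact ⟨none, by rw [ladd_same]; exact Or.inl rfl⟩
      · obtain ⟨w, hw⟩ := hcard x y y
        refine ⟨some w, ?_⟩
        rw [ladd_ne h]
        exact ⟨by simp, by simpa using hw.1, by simpa using hw.2.1⟩

lemma ladd_neg_unique (a b : Option G) (h : none ∈ lyndonAdd a b) : b = a := by
  cases a with
  | none => rw [ladd_zero] at h; exact h.symm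
  | some x =>
    cases b with
    | none => rw [ladd_zero'] at h; exact absurd h.symm (by simp)
    | some y =>
      by_cases hxy : x = y
      · rw [hxy]
      · rw [ladd_ne hxy] at h; exact absurd rfl h.1

lemma ladd_reversible (a b c : Option G) (h : a ∈ lyndonAdd b c) :
    c ∈ lyndonAdd a b := by
  cases b with
  | none =>
    rw [ladd_zero] at h; subst h; rw [ladd_zero']; rfl
  | some x =>
    cases c with
    | none =>
      rw [ladd_zero'] at h; subst h; rw [ladd_same]; exact Or.inl rfl
    | some y =>
      by_cases hxy : x = y
      · subst hxy
        rw [ladd_same] at h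
        rcases h with rfl | rfl
        · rw [ladd_zero]; rfl
        · rw [ladd_same]; exact Or.inr rfl
      · rw [ladd_ne hxy] at h
        obtain ⟨h0, hx, hy⟩ := h
        cases a with
        | none => exact absurd rfl h0
        | some u =>
          have hux : u ≠ x := fun h => hx (by rw [h])
          have huy : u ≠ y := fun h => hy (by rw [h])
          rw [ladd_ne hux]
          exact ⟨by simp, by simpa using Ne.symm huy, by simpa using Ne.symm hxy⟩

lemma ladd_left_distrib (hcard : ∀ x y z : G, ∃ w : G, w ≠ x ∧ w ≠ y ∧ w ≠ z)
    (a b c : Option G) :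
    (optMul a) '' (lyndonAdd b c) = lyndonAdd (optMul a b) (optMul a c) := by
  cases a with
  | none =>
    have h1 : ∀ u : Option G, optMul (none : Option G) u = none := fun u => by
      cases u <;> rfl
    ext t
    simp only [Set.mem_image, h1]
    constructor
    · rintro ⟨u, -, rfl⟩; rw [ladd_zero]; rfl
    · intro ht
      rw [ladd_zero] at ht
      obtain ⟨u, hu⟩ := ladd_nonempty hcard b c
      exact ⟨u, hu, ht.symm⟩
  | some g =>
    cases b with
    | none =>
      rw [ladd_zero, Set.image_singleton]
      show _ = lyndonAdd none _
      rw [ladd_zero]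
    | some x =>
      cases c with
      | none =>
        rw [ladd_zero', Set.image_singleton]
        show ({optMul (some g) (some x)} : Set (Option G)) = lyndonAdd _ none
        rw [ladd_zero']
      | some y =>
        by_cases hxy : x = y
        · subst hxy
          rw [ladd_same]
          show _ = lyndonAdd (some (g * x)) (some (g * x))
          rw [ladd_same]
          ext t
          simp only [Set.image_insert_eq, Set.image_singleton]
          rfl
        · rw [ladd_ne hxy]
          have hgxy : g * x ≠ g * y := fun h => hxy (mul_left_cancel h)
          show _ = lyndonAdd (some (g * x)) (some (g * y))
          rw [ladd_ne hgxy]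
          ext t
          constructor
          · rintro ⟨w, ⟨h0, hx, hy⟩, rfl⟩
            cases w with
            | none => exact absurd rfl h0
            | some u =>
              refine ⟨by simp [optMul], ?_, ?_⟩
              · simp only [optMul, ne_eq, Option.some.injEq]
                exact fun h => hx (by rw [mul_left_cancel h])
              · simp only [optMul, ne_eq, Option.some.injEq]
                exact fun h => hy (by rw [mul_left_cancel h])
          · rintro ⟨h0, hx, hy⟩
            cases t with
            | none => exact absurd rfl h0
            | some v =>
              refine ⟨some (g⁻¹ * v), ⟨by simp, ?_, ?_⟩, ?_⟩
              · simp only [ne_eq, Option.some.injEq]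
                intro h; apply hx
                simp [optMul, ← h, mul_inv_cancel_left]
              · simp only [ne_eq, Option.some.injEq]
                intro h; apply hy
                simp [optMul, ← h, mul_inv_cancel_left]
              · simp [optMul, mul_inv_cancel_left]

noncomputable def lyndonHF (hcard : ∀ x y z : G, ∃ w : G, w ≠ x ∧ w ≠ y ∧ w ≠ z) :
    Hyperfield (Option G) where
  zero := none
  hadd := lyndonAdd
  neg := id
  hadd_nonempty := ladd_nonempty hcard
  hadd_comm := ladd_comm
  hadd_assoc := ladd_assoc hcard
  zero_hadd := ladd_zero
  zero_mem_hadd_neg := fun a => by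
    cases a with
    | none => rfl
    | some x => rw [id, ladd_same]; exact Or.inl rfl
  neg_unique := ladd_neg_unique
  reversible := fun a b c h => ladd_reversible a b c h
  one := some 1
  mul := optMul
  mul_assoc := fun a b c => by cases a <;> cases b <;> cases c <;> simp [optMul, mul_assoc]
  one_mul := fun a => by cases a <;> simp [optMul]
  mul_one := fun a => by cases a <;> simp [optMul]
  left_distrib := ladd_left_distrib hcard
  right_distrib := fun a b c => by
    have h1 : (fun x => optMul x c) = optMul c := funext fun x => optMul_comm x c
    rw [h1, ladd_left_distrib hcard, optMul_comm c a, optMul_comm c b]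
  zero_mul := fun a => by cases a <;> rfl
  mul_zero := fun a => by cases a <;> rfl
  zero_ne_one := by simp
  exists_inv := fun a ha => by
    cases a with
    | none => exact absurd rfl ha
    | some x => exact ⟨some x⁻¹, by simp [optMul], by simp [optMul]⟩

end LyndonAux

/-- For an abelian group `H` with at least 4 elements, `R = H ∪ {0}` with Lyndon's
hyperaddition and the group multiplication (extended by `0 · g = g · 0 = 0`) is a
hyperfield extension of the Krasner hyperfield `K`. -/
theorem stmt15 (G : Type u) [CommGroup G]
    (h4 : ∃ a b c d : G, a ≠ b ∧ a ≠ c ∧ a ≠ d ∧ b ≠ c ∧ b ≠ d ∧ c ≠ d) :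
    ∃ H : Hyperfield (Option G), H.zero = none ∧ H.one = some 1 ∧
      H.mul = optMul ∧ H.hadd = lyndonAdd ∧
      H.hadd H.one H.one = {H.zero, H.one} := by
  obtain ⟨a, b, c, d, hab, hac, had, hbc, hbd, hcd⟩ := h4
  have hcard : ∀ x y z : G, ∃ w : G, w ≠ x ∧ w ≠ y ∧ w ≠ z := by
    intro x y z
    by_contra hc
    have hc' : ∀ w : G, w = x ∨ w = y ∨ w = z := by
      intro w
      rcases eq_or_ne w x with h | h
      · exact Or.inl h
      rcases eq_or_ne w y with h2 | h2
      · exact Or.inr (Or.inl h2)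
      rcases eq_or_ne w z with h3 | h3
      · exact Or.inr (Or.inr h3)
      exact absurd ⟨w, h, h2, h3⟩ hc
    rcases hc' a with rfl | rfl | rfl <;> rcases hc' b with rfl | rfl | rfl <;>
      rcases hc' c with rfl | rfl | rfl <;> rcases hc' d with rfl | rfl | rfl <;> simp_all
  exact ⟨lyndonHF hcard, rfl, rfl, rfl, rfl, ladd_same 1⟩
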